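/- Let ĝ, g ∈ ℝᵈ with ‖ĝ − g‖_∞ ≤ ε, Σ_j |g_j|^q ≤ C_g for some q ∈ [0,1), and ‖ĝ‖₁ ≤ ‖g‖₁. Decompose ĝ − g = ξ₁ + ξ₂ where ξ₂ keeps coordinates of ĝ with |ĝ_j| < 2εM and ξ₁ = ĝ·1{|ĝ_j| ≥ 2εM} − g, for a constant M ≥ 1 with ε ≤ εM. Then ‖ĝ − g‖₁ ≤ 2‖ξ₁‖₁ and ‖ξ₁‖₁ ≤ 4 C_g (εM)^{1−q}, hence ‖ĝ − g‖₁ ≤ 8 C_g (εM)^{1−q}. -/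
import Mathlib

/-- `|t|^q` with the convention `0^0 = 0` (so that for `q = 0` it is the indicator of
`t ≠ 0`, matching the ℓ₀ sparsity interpretation). -/
noncomputable def zrpow (t q : ℝ) : ℝ := if t = 0 then 0 else t ^ q

/-- Deterministic core of the CLIME error bound: if `‖ĝ − g‖_∞ ≤ ε`, `g` is ℓ_q-sparse
with `Σ_j |g_j|^q ≤ C_g` (`q ∈ [0,1)`), and `‖ĝ‖₁ ≤ ‖g‖₁`, then with the thresholding
decomposition `ξ₁ = ĝ·1{|ĝ_j| ≥ 2εM} − g`, one has `‖ĝ − g‖₁ ≤ 2‖ξ₁‖₁`,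
`‖ξ₁‖₁ ≤ 4 C_g (εM)^{1−q}` and `‖ĝ − g‖₁ ≤ 8 C_g (εM)^{1−q}`. -/
theorem stmt_13 (d : ℕ) (ghat g : Fin d → ℝ) (ε M Cg q : ℝ)
    (hq0 : 0 ≤ q) (hq1 : q < 1) (hM : 1 ≤ M) (hε : 0 ≤ ε)
    (hinf : ∀ j, |ghat j - g j| ≤ ε)
    (hsp : ∑ j, zrpow |g j| q ≤ Cg)
    (hopt : ∑ j, |ghat j| ≤ ∑ j, |g j|) :
    (∑ j, |ghat j - g j|
        ≤ 2 * ∑ j, |(if 2 * ε * M ≤ |ghat j| then ghat j else 0) - g j|) ∧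
    (∑ j, |(if 2 * ε * M ≤ |ghat j| then ghat j else 0) - g j|
        ≤ 4 * Cg * (ε * M) ^ (1 - q)) ∧
    (∑ j, |ghat j - g j| ≤ 8 * Cg * (ε * M) ^ (1 - q)) := by
  have hM0 : (0:ℝ) ≤ M := le_trans zero_le_one hM
  have ht : 0 ≤ ε * M := mul_nonneg hε hM0
  have hεt : ε ≤ ε * M := le_mul_of_one_le_right hε hM
  set f : Fin d → ℝ := fun j => (if 2 * ε * M ≤ |ghat j| then ghat j else 0) - g j with hf
  set f2 : Fin d → ℝ := fun j => if 2 * ε * M ≤ |ghat j| then 0 else ghat j with hf2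
  set S : Fin d → ℝ := fun j => if 2 * ε * M ≤ |ghat j| then |ghat j| else 0 with hS
  have hCg : 0 ≤ Cg := le_trans (Finset.sum_nonneg fun j _ => by
      unfold zrpow; split
      · exact le_refl 0
      · exact Real.rpow_nonneg (abs_nonneg _) _) hsp
  -- claim 1
  have hA : ∑ j, |ghat j - g j| ≤ ∑ j, |f j| + ∑ j, |f2 j| := by
    rw [← Finset.sum_add_distrib]
    refine Finset.sum_le_sum fun j _ => ?_
    have h : ghat j - g j = f j + f2 j := by
      simp only [hf, hf2]; split <;> ring
    rw [h]; exact abs_add_le _ _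
  have e1 : ∑ j, |f2 j| + ∑ j, S j = ∑ j, |ghat j| := by
    rw [← Finset.sum_add_distrib]
    refine Finset.sum_congr rfl fun j _ => ?_
    simp only [hf2, hS]; split <;> simp
  have e2 : ∑ j, |g j| ≤ ∑ j, |f j| + ∑ j, S j := by
    rw [← Finset.sum_add_distrib]
    refine Finset.sum_le_sum fun j _ => ?_
    simp only [hf, hS]; split
    · have h1 : |g j| - |ghat j| ≤ |g j - ghat j| := abs_sub_abs_le_abs_sub _ _
      rw [abs_sub_comm] at h1
      linarith [abs_nonneg (ghat j - g j)]
    · simp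
  have hB : ∑ j, |f2 j| ≤ ∑ j, |f j| := by linarith
  have hC1 : ∑ j, |ghat j - g j| ≤ 2 * ∑ j, |f j| := by linarith
  -- claim 2
  have hC2 : ∑ j, |f j| ≤ 4 * Cg * (ε * M) ^ (1 - q) := by
    rcases eq_or_lt_of_le ht with hz | hpos
    · -- ε * M = 0, hence ε = 0
      have hε0 : ε = 0 := by nlinarith
      have hz' : (ε * M : ℝ) ^ (1 - q) = 0 := by
        rw [← hz, Real.zero_rpow (by linarith)]
      rw [hz']
      have : ∑ j, |f j| ≤ 0 := Finset.sum_nonpos fun j _ => by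
        have h2 : (2 : ℝ) * ε * M ≤ |ghat j| := by
          rw [hε0]; simp [abs_nonneg (ghat j)]
        simp only [hf, if_pos h2]
        have := hinf j; rw [hε0] at this
        linarith
      have h0 : (0:ℝ) ≤ ∑ j, |f j| := Finset.sum_nonneg fun j _ => abs_nonneg _
      linarith
    · have hpt : ∀ j, |f j| ≤ 3 * (ε * M) ^ (1 - q) * zrpow |g j| q := by
        intro j
        by_cases hg : g j = 0
        · have hrhs : zrpow |g j| q = 0 := by simp [zrpow, hg]
          rw [hrhs, mul_zero]
          have hth : ¬ (2 * ε * M ≤ |ghat j|) := by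
            push_neg
            have h1 := hinf j; rw [hg, sub_zero] at h1
            calc |ghat j| ≤ ε := h1
              _ ≤ ε * M := hεt
              _ < 2 * ε * M := by nlinarith
          simp [hf, if_neg hth, hg]
        · have hgq : zrpow |g j| q = |g j| ^ q := by
            rw [zrpow, if_neg (fun h => hg (abs_eq_zero.mp h))]
          have hgabs : 0 < |g j| := abs_pos.mpr hg
          by_cases hth : 2 * ε * M ≤ |ghat j|
          · have hfj : |f j| ≤ ε * M := by
              simp only [hf, if_pos hth]; exact le_trans (hinf j) hεt
            have hgt : ε * M ≤ |g j| := by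
              have h1 := hinf j
              have h2 : |ghat j| - |g j| ≤ |ghat j - g j| := abs_sub_abs_le_abs_sub _ _
              nlinarith
            calc |f j| ≤ ε * M := hfj
              _ = (ε*M)^(1-q) * (ε*M)^q := by
                  rw [← Real.rpow_add hpos, sub_add_cancel, Real.rpow_one]
              _ ≤ (ε*M)^(1-q) * |g j|^q :=
                  mul_le_mul_of_nonneg_left (Real.rpow_le_rpow ht hgt hq0)
                    (Real.rpow_nonneg ht _)
              _ ≤ 3 * (ε*M)^(1-q) * |g j|^q := by
                  nlinarith [Real.rpow_nonneg ht (1-q),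
                    Real.rpow_nonneg (abs_nonneg (g j)) q,
                    mul_nonneg (Real.rpow_nonneg ht (1-q)) (Real.rpow_nonneg (abs_nonneg (g j)) q)]
              _ = 3 * (ε*M)^(1-q) * zrpow |g j| q := by rw [hgq]
          · have hfj : |f j| = |g j| := by
              simp only [hf, if_neg hth, zero_sub, abs_neg]
            have hth2 : |ghat j| < 2 * (ε * M) := by
              push_neg at hth; rw [mul_assoc] at hth; exact hth
            have hgle : |g j| ≤ 3 * (ε * M) := by
              have h1 := hinf j
              have h2 : |g j| - |ghat j| ≤ |g j - ghat j| := abs_sub_abs_le_abs_sub _ _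
              rw [abs_sub_comm] at h2
              linarith
            calc |f j| = |g j| := hfj
              _ = |g j| ^ q * |g j| ^ (1 - q) := by
                  rw [← Real.rpow_add hgabs, add_sub_cancel, Real.rpow_one]
              _ ≤ |g j| ^ q * (3 * (ε*M)) ^ (1 - q) :=
                  mul_le_mul_of_nonneg_left
                    (Real.rpow_le_rpow (abs_nonneg _) hgle (by linarith))
                    (Real.rpow_nonneg (abs_nonneg _) _)
              _ = |g j| ^ q * ((3:ℝ) ^ (1-q) * (ε*M) ^ (1-q)) := by
                  rw [Real.mul_rpow (by norm_num) ht]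
              _ ≤ |g j| ^ q * (3 * (ε*M) ^ (1-q)) := by
                  have h3 : (3:ℝ)^(1-q) ≤ 3 := by
                    calc (3:ℝ)^(1-q) ≤ (3:ℝ)^(1:ℝ) :=
                          Real.rpow_le_rpow_of_exponent_le (by norm_num) (by linarith)
                      _ = 3 := Real.rpow_one 3
                  exact mul_le_mul_of_nonneg_left
                    (mul_le_mul_of_nonneg_right h3 (Real.rpow_nonneg ht _))
                    (Real.rpow_nonneg (abs_nonneg _) _)
              _ = 3 * (ε*M)^(1-q) * zrpow |g j| q := by rw [hgq]; ring
      calc ∑ j, |f j| ≤ ∑ j, 3 * (ε * M) ^ (1 - q) * zrpow |g j| q :=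
            Finset.sum_le_sum fun j _ => hpt j
        _ = 3 * (ε * M) ^ (1 - q) * ∑ j, zrpow |g j| q := by rw [Finset.mul_sum]
        _ ≤ 3 * (ε * M) ^ (1 - q) * Cg :=
            mul_le_mul_of_nonneg_left hsp
              (mul_nonneg (by norm_num) (Real.rpow_nonneg ht _))
        _ ≤ 4 * Cg * (ε * M) ^ (1 - q) := by
            nlinarith [Real.rpow_nonneg ht (1-q), mul_nonneg hCg (Real.rpow_nonneg ht (1-q))]
  exact ⟨hC1, hC2, by linarith⟩
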